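/- Let 0 < m ≤ L, p ≥ 1, ρ ∈ (0,1], and let H ∈ S(m,L,p) have global minimizer z⋆. Let ℓ⁻, ℓ⁺ ∈ ℕ and let real numbers m_i, i = −ℓ⁻, …, ℓ⁺, satisfy: m_i ≤ 0 for every i ≠ 0, Σ_{i=−ℓ⁻}^{ℓ⁺} m_i ρ^{−i} ≥ 0, and Σ_{i=−ℓ⁻}^{ℓ⁺} m_i ρ^{i} ≥ 0. Let y : ℕ → ℝ^p be square-summable, and define for k ∈ ℕ: w_k := ρ^{−k}(∇H(ρ^k y_k + z⋆) − m ρ^k y_k) and u_k := (L − m) y_k − w_k, with the convention u_j := 0 for j < 0. Then the family (k,i) ↦ m_i ⟨w_k, u_{k+i}⟩ (k ∈ ℕ, i ∈ {−ℓ⁻, …, ℓ⁺}) is absolutely summable and Σ_{k=0}^{∞} Σ_{i=−ℓ⁻}^{ℓ⁺} m_i ⟨w_k, u_{k+i}⟩ ≥ 0, where ⟨·,·⟩ is the Euclidean inner product on ℝ^p. -/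

import Mathlib

noncomputable section

abbrev E (p : ℕ) := EuclideanSpace ℝ (Fin p)

/-- The class `S(m,L,p)` of differentiable, `m`-strongly convex functions with
`L`-Lipschitz gradient. -/
def SClass (m L : ℝ) (p : ℕ) : Set (EuclideanSpace ℝ (Fin p) → ℝ) :=
  {H | Differentiable ℝ H ∧
       ConvexOn ℝ Set.univ (fun x => H x - m / 2 * ‖x‖ ^ 2) ∧
       LipschitzWith L.toNNReal (fun x => gradient H x)}

open Set InnerProductSpace

set_option linter.unusedSectionVars false
set_option maxHeartbeats 1600000

section AuxLemmas

variable {F : Type*} [NormedAddCommGroup F] [InnerProductSpace ℝ F] [CompleteSpace F]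

local notation "⟪" x ", " y "⟫" => @inner ℝ _ _ x y

lemma aux_line_hasDerivAt {f : F → ℝ} (hd : Differentiable ℝ f) (a v : F) (t : ℝ) :
    HasDerivAt (fun s : ℝ => f (s • v + a)) ⟪gradient f (t • v + a), v⟫ t := by
  have hc : HasDerivAt (fun s : ℝ => s • v + a) v t := by
    simpa using ((hasDerivAt_id t).smul_const v).add_const a
  have hf : HasFDerivAt f (toDual ℝ F (gradient f (t • v + a))) (t • v + a) :=
    (hd _).hasGradientAt.hasFDerivAt
  simpa [Function.comp_def] using hf.comp_hasDerivAt t hc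

lemma aux_line_convexOn {f : F → ℝ} (hc : ConvexOn ℝ univ f) (a v : F) :
    ConvexOn ℝ univ (fun s : ℝ => f (s • v + a)) := by
  have := hc.comp_affineMap (AffineMap.lineMap a (a + v) : ℝ →ᵃ[ℝ] F)
  simpa [Function.comp_def, AffineMap.lineMap_apply_module'] using this

lemma aux_first_order {f : F → ℝ} (hd : Differentiable ℝ f) (hc : ConvexOn ℝ univ f) (x y : F) :
    f x + ⟪gradient f x, y - x⟫ ≤ f y := by
  have hφ := aux_line_convexOn hc x (y - x)
  have h0 := aux_line_hasDerivAt hd x (y - x) 0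
  have h0' : HasDerivAt (fun s : ℝ => f (s • (y - x) + x)) ⟪gradient f x, y - x⟫ 0 := by
    simpa using h0
  have := hφ.le_slope_of_hasDerivAt (mem_univ (0:ℝ)) (mem_univ (1:ℝ)) one_pos h0'
  rw [slope_def_field] at this
  simp only [zero_smul, zero_add, one_smul, sub_add_cancel, sub_zero, div_one] at this
  linarith

lemma aux_monotone_of_convex {f : F → ℝ} (hd : Differentiable ℝ f)
    (hc : ConvexOn ℝ univ f) (a b : F) :
    0 ≤ ⟪gradient f a - gradient f b, a - b⟫ := by
  have h1 := aux_first_order hd hc a b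
  have h2 := aux_first_order hd hc b a
  have e1 : ⟪gradient f a - gradient f b, a - b⟫
      = -⟪gradient f a, b - a⟫ - ⟪gradient f b, a - b⟫ := by
    rw [inner_sub_left]
    have : ⟪gradient f a, a - b⟫ = -⟪gradient f a, b - a⟫ := by
      rw [← inner_neg_right, neg_sub]
    rw [this]
  linarith

lemma aux_convexOn_of_monotone {f : F → ℝ} (hd : Differentiable ℝ f)
    (hm : ∀ a b : F, 0 ≤ ⟪gradient f a - gradient f b, a - b⟫) :
    ConvexOn ℝ univ f := by
  refine ⟨convex_univ, fun a _ b _ s t hs ht hst => ?_⟩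
  set φ : ℝ → ℝ := fun r => f (r • (b - a) + a) with hφdef
  have hφd : ∀ r : ℝ, HasDerivAt φ ⟪gradient f (r • (b - a) + a), b - a⟫ r :=
    fun r => aux_line_hasDerivAt hd a (b - a) r
  have hderiv : deriv φ = fun r => ⟪gradient f (r • (b - a) + a), b - a⟫ :=
    funext fun r => (hφd r).deriv
  have hφdiff : Differentiable ℝ φ := fun r => (hφd r).differentiableAt
  have hmono : Monotone (deriv φ) := by
    rw [hderiv]
    intro r s hrs
    rcases eq_or_lt_of_le hrs with rfl | hlt
    · exact le_rfl
    · have h := hm (s • (b - a) + a) (r • (b - a) + a)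
      have heq : (s • (b - a) + a) - (r • (b - a) + a) = (s - r) • (b - a) := by
        rw [sub_smul]; abel
      rw [heq, real_inner_smul_right, inner_sub_left] at h
      simp only
      nlinarith [h]
  have hφconv : ConvexOn ℝ univ φ := Monotone.convexOn_univ_of_deriv hφdiff hmono
  have h01 := hφconv.2 (mem_univ (0:ℝ)) (mem_univ (1:ℝ)) hs ht hst
  simp only [smul_eq_mul, mul_zero, mul_one, zero_add] at h01
  have hval : φ t = f (s • a + t • b) := by
    have : t • (b - a) + a = s • a + t • b := by
      have hs' : s = 1 - t := by linarith
      rw [hs', smul_sub, sub_smul, one_smul]; abel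
    simp [hφdef, this]
  have h0 : φ 0 = f a := by simp [hφdef]
  have h1 : φ 1 = f b := by simp [hφdef]
  rw [hval, h0, h1] at h01
  simpa using h01

lemma aux_grad_normsq (x : F) : HasGradientAt (fun z : F => ‖z‖ ^ 2) ((2:ℝ) • x) x := by
  have h : HasFDerivAt (fun z : F => ⟪z, z⟫)
      ((fderivInnerCLM ℝ (x, x)).comp ((ContinuousLinearMap.id ℝ F).prod
        (ContinuousLinearMap.id ℝ F))) x :=
    (hasFDerivAt_id x).inner ℝ (hasFDerivAt_id x)
  have hfun : (fun z : F => ⟪z, z⟫) = fun z : F => ‖z‖ ^ 2 := by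
    funext z; exact real_inner_self_eq_norm_sq z
  rw [hfun] at h
  have hclm : (fderivInnerCLM ℝ (x, x)).comp ((ContinuousLinearMap.id ℝ F).prod
      (ContinuousLinearMap.id ℝ F)) = toDual ℝ F ((2:ℝ) • x) := by
    ext v
    simp [fderivInnerCLM_apply, real_inner_comm, two_smul, inner_add_left]
  rw [hclm] at h
  simpa using h.hasGradientAt

lemma aux_grad_combo {f : F → ℝ} (hd : Differentiable ℝ f) (C : ℝ) (x : F) :
    HasGradientAt (fun z => C / 2 * ‖z‖ ^ 2 - f z) (C • x - gradient f x) x := by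
  have h1 : HasFDerivAt (fun z : F => ‖z‖ ^ 2) (toDual ℝ F ((2:ℝ) • x)) x :=
    (aux_grad_normsq x).hasFDerivAt
  have h2 : HasFDerivAt f (toDual ℝ F (gradient f x)) x := (hd x).hasGradientAt.hasFDerivAt
  have h3 := (h1.const_mul (C / 2)).sub h2
  have hclm : (C / 2) • (toDual ℝ F ((2:ℝ) • x)) - toDual ℝ F (gradient f x)
      = toDual ℝ F (C • x - gradient f x) := by
    rw [← map_smul, ← map_sub, smul_smul]
    norm_num
  rw [hclm] at h3
  have h4 := h3.hasGradientAt
  rw [LinearIsometryEquiv.symm_apply_apply] at h4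
  exact h4

lemma aux_grad_diff {f : F → ℝ} (hd : Differentiable ℝ f) (C : ℝ) :
    Differentiable ℝ (fun z : F => C / 2 * ‖z‖ ^ 2 - f z) :=
  fun x => (aux_grad_combo hd C x).differentiableAt

lemma aux_grad_sub_normsq {f : F → ℝ} (hd : Differentiable ℝ f) (C : ℝ) (x : F) :
    HasGradientAt (fun z => f z - C / 2 * ‖z‖ ^ 2) (gradient f x - C • x) x := by
  have h1 : HasFDerivAt (fun z : F => ‖z‖ ^ 2) (toDual ℝ F ((2:ℝ) • x)) x :=
    (aux_grad_normsq x).hasFDerivAt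
  have h2 : HasFDerivAt f (toDual ℝ F (gradient f x)) x := (hd x).hasGradientAt.hasFDerivAt
  have h3 := h2.sub (h1.const_mul (C / 2))
  have hclm : toDual ℝ F (gradient f x) - (C / 2) • (toDual ℝ F ((2:ℝ) • x))
      = toDual ℝ F (gradient f x - C • x) := by
    rw [← map_smul, ← map_sub, smul_smul]
    norm_num
  rw [hclm] at h3
  have h4 := h3.hasGradientAt
  rw [LinearIsometryEquiv.symm_apply_apply] at h4
  exact h4

lemma aux_grad_shift {f : F → ℝ} (hd : Differentiable ℝ f) (c : F) (K C : ℝ) (x : F) :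
    HasGradientAt (fun z => f (z + c) - K - C / 2 * ‖z‖ ^ 2) (gradient f (x + c) - C • x) x := by
  have h1 : HasFDerivAt (fun z : F => f (z + c)) (toDual ℝ F (gradient f (x + c))) x := by
    have := ((hd (x + c)).hasGradientAt.hasFDerivAt).comp x ((hasFDerivAt_id x).add_const c)
    simpa [Function.comp_def] using this
  have h2 : HasFDerivAt (fun z : F => ‖z‖ ^ 2) (toDual ℝ F ((2:ℝ) • x)) x :=
    (aux_grad_normsq x).hasFDerivAt
  have h3 := (h1.sub_const K).sub (h2.const_mul (C / 2))
  have hclm : toDual ℝ F (gradient f (x + c)) - (C / 2) • (toDual ℝ F ((2:ℝ) • x))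
      = toDual ℝ F (gradient f (x + c) - C • x) := by
    rw [← map_smul, ← map_sub, smul_smul]
    norm_num
  rw [hclm] at h3
  have h4 := h3.hasGradientAt
  rw [LinearIsometryEquiv.symm_apply_apply] at h4
  exact h4

lemma aux_descent {f : F → ℝ} (hd : Differentiable ℝ f) {C : ℝ}
    (hsm : ConvexOn ℝ univ (fun z => C / 2 * ‖z‖ ^ 2 - f z)) (a b : F) :
    f b ≤ f a + ⟪gradient f a, b - a⟫ + C / 2 * ‖b - a‖ ^ 2 := by
  have h := aux_first_order (aux_grad_diff hd C) hsm a b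
  rw [(aux_grad_combo hd C a).gradient] at h
  have e1 : ⟪C • a - gradient f a, b - a⟫ = C * ⟪a, b - a⟫ - ⟪gradient f a, b - a⟫ := by
    rw [inner_sub_left, real_inner_smul_left]
  have e2 : ‖b - a‖ ^ 2 = ‖b‖ ^ 2 - 2 * ⟪b, a⟫ + ‖a‖ ^ 2 := norm_sub_sq_real b a
  have e3 : ⟪a, b - a⟫ = ⟪a, b⟫ - ‖a‖ ^ 2 := by
    rw [inner_sub_right, real_inner_self_eq_norm_sq]
  have e4 : ⟪a, b⟫ = ⟪b, a⟫ := real_inner_comm b a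
  have e7 : C * ⟪a, b - a⟫ = C * ⟪b, a⟫ - C * ‖a‖ ^ 2 := by rw [e3, e4]; ring
  rw [e1] at h
  have e8 : C / 2 * ‖b - a‖ ^ 2 = C / 2 * ‖b‖ ^ 2 - C * ⟪b, a⟫ + C / 2 * ‖a‖ ^ 2 := by
    rw [e2]; ring
  linarith [h, e7, e8]

lemma aux_interp {f : F → ℝ} (hd : Differentiable ℝ f) (hc : ConvexOn ℝ univ f)
    {C : ℝ} (hC : 0 ≤ C) (hsm : ConvexOn ℝ univ (fun z => C / 2 * ‖z‖ ^ 2 - f z)) (x y : F) :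
    1 / 2 * ‖gradient f y - gradient f x‖ ^ 2 ≤ C * (f y - f x - ⟪gradient f x, y - x⟫) := by
  rcases hC.eq_or_lt with hC0 | hCpos
  · subst hC0
    have heq : ∀ a b : F, f b = f a + ⟪gradient f a, b - a⟫ := by
      intro a b
      have h1 := aux_first_order hd hc a b
      have h2 := aux_descent hd hsm a b
      simp only [zero_div, zero_mul, add_zero] at h2
      linarith
    have hgrad : gradient f y = gradient f x := by
      have hz : ∀ z : F, ⟪gradient f y - gradient f x, z - y⟫ = 0 := by
        intro z
        have e1 := heq y z
        have e2 := heq x z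
        have e3 := heq x y
        have e4 : ⟪gradient f x, z - x⟫ = ⟪gradient f x, z - y⟫ + ⟪gradient f x, y - x⟫ := by
          rw [← inner_add_right]; congr 1; abel
        rw [inner_sub_left]
        linarith
      have := hz (y + (gradient f y - gradient f x))
      simp only [add_sub_cancel_left] at this
      exact sub_eq_zero.mp (inner_self_eq_zero.mp this)
    rw [hgrad]
    simp
  · set d := gradient f y - gradient f x with hd_def
    set z := y - C⁻¹ • d with hz_def
    have hlow := aux_first_order hd hc x z
    have hup := aux_descent hd hsm y z
    have ezy : z - y = -(C⁻¹ • d) := by rw [hz_def]; abel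
    have e1 : ⟪gradient f y, z - y⟫ = -(C⁻¹ * ⟪gradient f y, d⟫) := by
      rw [ezy, inner_neg_right, real_inner_smul_right]
    have e2 : ‖z - y‖ ^ 2 = C⁻¹ ^ 2 * ‖d‖ ^ 2 := by
      rw [ezy, norm_neg, norm_smul]
      simp [mul_pow, abs_of_nonneg (inv_nonneg.mpr hC)]
    have e3 : ⟪gradient f x, z - x⟫ = -(C⁻¹ * ⟪gradient f x, d⟫) + ⟪gradient f x, y - x⟫ := by
      have : z - x = -(C⁻¹ • d) + (y - x) := by rw [hz_def]; abel
      rw [this, inner_add_right, inner_neg_right, real_inner_smul_right]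
    have e4 : ⟪gradient f y, d⟫ - ⟪gradient f x, d⟫ = ‖d‖ ^ 2 := by
      rw [← inner_sub_left, ← hd_def, real_inner_self_eq_norm_sq]
    rw [e1, e2] at hup
    rw [e3] at hlow
    have hC' : C ≠ 0 := ne_of_gt hCpos
    have key : C⁻¹ * ‖d‖ ^ 2 - C / 2 * (C⁻¹ ^ 2 * ‖d‖ ^ 2) = 1 / 2 * C⁻¹ * ‖d‖ ^ 2 := by
      field_simp; ring
    have e5 : C⁻¹ * ⟪gradient f y, d⟫ - C⁻¹ * ⟪gradient f x, d⟫ = C⁻¹ * ‖d‖ ^ 2 := by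
      rw [← mul_sub, e4]
    have h5 : 1 / 2 * C⁻¹ * ‖d‖ ^ 2 ≤ f y - f x - ⟪gradient f x, y - x⟫ := by
      linarith [hlow, hup, e5, key]
    have h6 := mul_le_mul_of_nonneg_left h5 hCpos.le
    have e6 : C * (1 / 2 * C⁻¹ * ‖d‖ ^ 2) = 1 / 2 * ‖d‖ ^ 2 := by field_simp
    linarith


end AuxLemmas

theorem stmt_7 (p : ℕ) (hp : 1 ≤ p) (m L : ℝ) (hm : 0 < m) (hmL : m ≤ L)
    (ρ : ℝ) (hρ0 : 0 < ρ) (hρ1 : ρ ≤ 1)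
    (H : E p → ℝ) (hH : H ∈ SClass m L p)
    (zstar : E p) (hz : ∀ x, H zstar ≤ H x)
    (lm lp : ℕ) (mc : ℤ → ℝ)
    (hneg : ∀ i ∈ Finset.Icc (-(lm : ℤ)) (lp : ℤ), i ≠ 0 → mc i ≤ 0)
    (hsum1 : 0 ≤ ∑ i ∈ Finset.Icc (-(lm : ℤ)) (lp : ℤ), mc i * ρ ^ (-i))
    (hsum2 : 0 ≤ ∑ i ∈ Finset.Icc (-(lm : ℤ)) (lp : ℤ), mc i * ρ ^ i)
    (y : ℕ → E p) (hy : Summable (fun k => ‖y k‖ ^ 2))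
    (w : ℕ → E p) (u : ℤ → E p)
    (hw : ∀ k : ℕ, w k = (ρ ^ k)⁻¹ •
      (gradient H ((ρ ^ k) • y k + zstar) - m • ((ρ ^ k) • y k)))
    (hu : ∀ j : ℤ, u j = if j < 0 then 0 else (L - m) • y j.toNat - w j.toNat) :
    Summable (fun ki : ℕ × ℤ =>
      if ki.2 ∈ Finset.Icc (-(lm : ℤ)) (lp : ℤ) then
        |mc ki.2 * (inner ℝ (w ki.1) (u ((ki.1 : ℤ) + ki.2)) : ℝ)| else 0) ∧
    0 ≤ ∑' k : ℕ, ∑ i ∈ Finset.Icc (-(lm : ℤ)) (lp : ℤ),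
          mc i * (inner ℝ (w k) (u ((k : ℤ) + i)) : ℝ) := by
  classical
  obtain ⟨hHdiff, hHconv, hHlip⟩ := hH
  have hL0 : (0:ℝ) < L := lt_of_lt_of_le hm hmL
  obtain ⟨L', hL'def⟩ : ∃ l : ℝ, l = L - m := ⟨_, rfl⟩
  have hL' : 0 ≤ L' := by rw [hL'def]; linarith
  have hlipH : ∀ a b : E p, ‖gradient H a - gradient H b‖ ≤ L * ‖a - b‖ := by
    intro a b
    have h := hHlip.dist_le_mul a b
    rw [dist_eq_norm, dist_eq_norm] at h
    rwa [Real.coe_toNNReal L hL0.le] at h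
  have hgradHz : gradient H zstar = 0 := by
    have hmin : IsLocalMin H zstar := Filter.Eventually.of_forall hz
    have h := hmin.fderiv_eq_zero
    simp [gradient, h]
  obtain ⟨g, hgdef⟩ : ∃ gg : E p → ℝ,
      gg = fun x => H (x + zstar) - H zstar - m / 2 * ‖x‖ ^ 2 := ⟨_, rfl⟩
  have hgg : ∀ x : E p, HasGradientAt g (gradient H (x + zstar) - m • x) x := by
    rw [hgdef]; exact fun x => aux_grad_shift hHdiff zstar (H zstar) m x
  have hgdiff : Differentiable ℝ g := fun x => (hgg x).differentiableAt
  have hggrad : ∀ x, gradient g x = gradient H (x + zstar) - m • x := fun x => (hgg x).gradient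
  have hg0 : g 0 = 0 := by rw [hgdef]; simp
  have hggrad0 : gradient g 0 = 0 := by rw [hggrad]; simp [hgradHz]
  have hf0g : ∀ x : E p, HasGradientAt (fun x : E p => H x - m / 2 * ‖x‖ ^ 2)
      (gradient H x - m • x) x := fun x => aux_grad_sub_normsq hHdiff m x
  have hf0diff : Differentiable ℝ (fun x : E p => H x - m / 2 * ‖x‖ ^ 2) :=
    fun x => (hf0g x).differentiableAt
  have hgconv : ConvexOn ℝ Set.univ g := by
    apply aux_convexOn_of_monotone hgdiff
    intro a b
    have h := aux_monotone_of_convex hf0diff hHconv (a + zstar) (b + zstar)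
    rw [(hf0g (a + zstar)).gradient, (hf0g (b + zstar)).gradient] at h
    rw [hggrad a, hggrad b]
    have hv : (gradient H (a + zstar) - m • (a + zstar)) - (gradient H (b + zstar) - m • (b + zstar))
        = (gradient H (a + zstar) - m • a) - (gradient H (b + zstar) - m • b) := by
      module
    have hv2 : (a + zstar) - (b + zstar) = a - b := by abel
    rwa [hv, hv2] at h
  have hsmg : ConvexOn ℝ Set.univ (fun z : E p => L' / 2 * ‖z‖ ^ 2 - g z) := by
    apply aux_convexOn_of_monotone (aux_grad_diff hgdiff L')
    intro a b
    rw [(aux_grad_combo hgdiff L' a).gradient, (aux_grad_combo hgdiff L' b).gradient,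
      hggrad a, hggrad b]
    have hv : (L' • a - (gradient H (a + zstar) - m • a)) - (L' • b - (gradient H (b + zstar) - m • b))
        = L • (a - b) - (gradient H (a + zstar) - gradient H (b + zstar)) := by
      rw [hL'def]; module
    rw [hv, inner_sub_left, real_inner_smul_left, real_inner_self_eq_norm_sq]
    have hCS := real_inner_le_norm (gradient H (a + zstar) - gradient H (b + zstar)) (a - b)
    have hlip := hlipH (a + zstar) (b + zstar)
    have he : (a + zstar) - (b + zstar) = a - b := by abel
    rw [he] at hlip
    nlinarith [norm_nonneg (a - b), norm_nonneg (gradient H (a + zstar) - gradient H (b + zstar))]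
  have hA : ∀ x y : E p, 1 / 2 * ‖gradient g y - gradient g x‖ ^ 2
      ≤ L' * (g y - g x - (inner ℝ (gradient g x) (y - x) : ℝ)) :=
    aux_interp hgdiff hgconv hL' hsmg
  -- sequences
  obtain ⟨X, hXapp⟩ : ∃ X : ℕ → E p, ∀ k, X k = (ρ ^ k) • y k := ⟨_, fun k => rfl⟩
  obtain ⟨W, hWapp⟩ : ∃ W : ℕ → E p, ∀ k, W k = gradient g (X k) := ⟨_, fun k => rfl⟩
  have hρk : ∀ k : ℕ, (0:ℝ) < ρ ^ k := fun k => pow_pos hρ0 k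
  have hwW : ∀ k, w k = (ρ ^ k)⁻¹ • W k := by
    intro k
    rw [hw k, hWapp k, hggrad (X k), hXapp k]
  have hyX : ∀ k, y k = (ρ ^ k)⁻¹ • X k := by
    intro k; rw [hXapp k, inv_smul_smul₀ (ne_of_gt (hρk k))]
  have hXnorm : ∀ k, ‖X k‖ = ρ ^ k * ‖y k‖ := by
    intro k
    rw [hXapp k, norm_smul, Real.norm_eq_abs, abs_of_pos (hρk k)]
  -- basic inequalities from interpolation
  have hpr : ∀ k, 1 / 2 * ‖W k‖ ^ 2 ≤ L' * g (X k) := by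
    intro k
    have h := hA 0 (X k)
    rw [hggrad0, hg0, ← hWapp k] at h
    simpa using h
  have hqr : ∀ k, 1 / 2 * ‖W k‖ ^ 2 ≤ L' * (inner ℝ (W k) (X k) : ℝ) - L' * g (X k) := by
    intro k
    have h := hA (X k) 0
    rw [hggrad0, hg0, ← hWapp k] at h
    have e : (inner ℝ (W k) ((0:E p) - X k) : ℝ) = -(inner ℝ (W k) (X k) : ℝ) := by
      rw [zero_sub, inner_neg_right]
    rw [e] at h
    have e2 : L' * (0 - g (X k) - -(inner ℝ (W k) (X k) : ℝ))
        = L' * (inner ℝ (W k) (X k) : ℝ) - L' * g (X k) := by ring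
    rw [e2] at h
    simpa using h
  have hgub : ∀ k, g (X k) ≤ L' / 2 * ‖X k‖ ^ 2 := by
    intro k
    have hsmdiff := aux_grad_diff hgdiff L'
    have h := aux_first_order hsmdiff hsmg 0 (X k)
    rw [(aux_grad_combo hgdiff L' 0).gradient] at h
    rw [hggrad0] at h
    simp only [smul_zero, sub_zero, norm_zero] at h
    simp only [hg0] at h
    simpa using h
  have hWX : ∀ k, ‖W k‖ ≤ L' * ‖X k‖ := by
    intro k
    rcases (norm_nonneg (W k)).eq_or_lt with h0 | h0
    · rw [← h0]; positivity
    · have a1 := hpr k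
      have a2 := hqr k
      have h1 : ‖W k‖ ^ 2 ≤ L' * (inner ℝ (W k) (X k) : ℝ) := by linarith
      have h2 : (inner ℝ (W k) (X k) : ℝ) ≤ ‖W k‖ * ‖X k‖ := real_inner_le_norm _ _
      have h3 : ‖W k‖ * ‖W k‖ ≤ (L' * ‖X k‖) * ‖W k‖ := by
        nlinarith [mul_le_mul_of_nonneg_left h2 hL']
      exact le_of_mul_le_mul_right h3 h0
  have hwnorm : ∀ k, ‖w k‖ ≤ L' * ‖y k‖ := by
    intro k
    rw [hwW k, norm_smul, Real.norm_eq_abs, abs_of_pos (inv_pos.mpr (hρk k))]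
    have h1 := hWX k
    rw [hXnorm k] at h1
    have h2 := mul_le_mul_of_nonneg_left h1 (le_of_lt (inv_pos.mpr (hρk k)))
    calc (ρ ^ k)⁻¹ * ‖W k‖ ≤ (ρ ^ k)⁻¹ * (L' * (ρ ^ k * ‖y k‖)) := h2
      _ = L' * ‖y k‖ := by field_simp
  have hunorm : ∀ j : ℕ, ‖u (j:ℤ)‖ ≤ 2 * L' * ‖y j‖ := by
    intro j
    rw [hu (j:ℤ)]
    have hnn : ¬((j:ℤ) < 0) := by omega
    rw [if_neg hnn]
    have e : ((j:ℤ)).toNat = j := Int.toNat_natCast j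
    rw [e]
    calc ‖(L - m) • y j - w j‖ ≤ ‖(L - m) • y j‖ + ‖w j‖ := norm_sub_le _ _
      _ ≤ L' * ‖y j‖ + L' * ‖y j‖ := by
          refine add_le_add ?_ (hwnorm j)
          rw [norm_smul, Real.norm_eq_abs, ← hL'def, abs_of_nonneg hL']
      _ = 2 * L' * ‖y j‖ := by ring
  -- normalized quantities
  obtain ⟨P, hPapp⟩ : ∃ P : ℕ → ℝ, ∀ k, P k = L' * g (X k) / (ρ ^ k) ^ 2 := ⟨_, fun k => rfl⟩
  obtain ⟨Q, hQapp⟩ : ∃ Q : ℕ → ℝ, ∀ k,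
      Q k = (L' * (inner ℝ (W k) (X k) : ℝ) - L' * g (X k)) / (ρ ^ k) ^ 2 := ⟨_, fun k => rfl⟩
  obtain ⟨R, hRapp⟩ : ∃ R : ℕ → ℝ, ∀ k, R k = 1 / 2 * ‖W k‖ ^ 2 / (ρ ^ k) ^ 2 := ⟨_, fun k => rfl⟩
  have hρk2 : ∀ k : ℕ, (0:ℝ) < (ρ ^ k) ^ 2 := fun k => pow_pos (hρk k) 2
  have hR0 : ∀ k, 0 ≤ R k := by
    intro k; rw [hRapp k]; positivity
  have hRP : ∀ k, R k ≤ P k := by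
    intro k; rw [hRapp k, hPapp k]
    exact div_le_div_of_nonneg_right (hpr k) (hρk2 k).le
  have hRQ : ∀ k, R k ≤ Q k := by
    intro k; rw [hRapp k, hQapp k]
    exact div_le_div_of_nonneg_right (hqr k) (hρk2 k).le
  have hPb : ∀ k, P k ≤ L' ^ 2 * ‖y k‖ ^ 2 := by
    intro k
    rw [hPapp k, div_le_iff₀ (hρk2 k)]
    have h1 : L' * g (X k) ≤ L' * (L' / 2 * ‖X k‖ ^ 2) :=
      mul_le_mul_of_nonneg_left (hgub k) hL'
    have h2 : ‖X k‖ ^ 2 = (ρ ^ k) ^ 2 * ‖y k‖ ^ 2 := by rw [hXnorm k]; ring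
    nlinarith [sq_nonneg (ρ ^ k), sq_nonneg ‖y k‖, sq_nonneg L', mul_pos (hρk2 k) (hρk2 k)]
  have hQb : ∀ k, Q k ≤ L' ^ 2 * ‖y k‖ ^ 2 := by
    intro k
    rw [hQapp k, div_le_iff₀ (hρk2 k)]
    have h0 : 0 ≤ L' * g (X k) := le_trans (by positivity) (hpr k)
    have h2 : (inner ℝ (W k) (X k) : ℝ) ≤ ‖W k‖ * ‖X k‖ := real_inner_le_norm _ _
    have h3 : ‖W k‖ * ‖X k‖ ≤ (L' * ‖X k‖) * ‖X k‖ :=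
      mul_le_mul_of_nonneg_right (hWX k) (norm_nonneg _)
    have h4 : L' * (inner ℝ (W k) (X k) : ℝ) ≤ L' * (L' * ‖X k‖ * ‖X k‖) := by
      apply mul_le_mul_of_nonneg_left _ hL'
      exact le_trans h2 h3
    have h5 : ‖X k‖ * ‖X k‖ = (ρ ^ k) ^ 2 * ‖y k‖ ^ 2 := by rw [hXnorm k]; ring
    nlinarith [h4, h5]
  -- inner product formulas
  have hip : ∀ k j : ℕ, (inner ℝ (w k) (u (j:ℤ)) : ℝ)
      = (ρ ^ k)⁻¹ * (ρ ^ j)⁻¹ * (L' * (inner ℝ (W k) (X j) : ℝ) - (inner ℝ (W k) (W j) : ℝ)) := by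
    intro k j
    rw [hu (j:ℤ), if_neg (by omega : ¬((j:ℤ) < 0))]
    rw [Int.toNat_natCast j]
    rw [hwW k, hwW j, hyX j]
    rw [inner_smul_left, inner_sub_right, inner_smul_right, inner_smul_right, inner_smul_right]
    rw [← hL'def]
    simp only [RCLike.star_def, conj_trivial]
    ring
  have hdiag : ∀ k : ℕ, (inner ℝ (w k) (u (k:ℤ)) : ℝ) = (P k - R k) + (Q k - R k) := by
    intro k
    rw [hip k k, real_inner_self_eq_norm_sq (W k), hPapp k, hQapp k, hRapp k]
    field_simp
    ring
  have hzpow : ∀ a b : ℕ, (ρ:ℝ) ^ ((a:ℤ) - (b:ℤ)) = ρ ^ a * (ρ ^ b)⁻¹ := by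
    intro a b
    rw [zpow_sub₀ (ne_of_gt hρ0), zpow_natCast, zpow_natCast, div_eq_mul_inv]
  have hcross : ∀ k j : ℕ, (inner ℝ (w k) (u (j:ℤ)) : ℝ)
      ≤ ρ ^ ((j:ℤ) - (k:ℤ)) * (P j - R j) + ρ ^ ((k:ℤ) - (j:ℤ)) * (Q k - R k) := by
    intro k j
    have h := hA (X k) (X j)
    rw [← hWapp k, ← hWapp j] at h
    have e1 : ‖W j - W k‖ ^ 2 = ‖W j‖ ^ 2 - 2 * (inner ℝ (W j) (W k) : ℝ) + ‖W k‖ ^ 2 :=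
      norm_sub_sq_real (W j) (W k)
    have e2 : (inner ℝ (W k) (X j - X k) : ℝ)
        = (inner ℝ (W k) (X j) : ℝ) - (inner ℝ (W k) (X k) : ℝ) := inner_sub_right _ _ _
    have e3 : (inner ℝ (W j) (W k) : ℝ) = (inner ℝ (W k) (W j) : ℝ) := real_inner_comm _ _
    have e4 : L' * (g (X j) - g (X k) - ((inner ℝ (W k) (X j) : ℝ) - (inner ℝ (W k) (X k) : ℝ)))
        = L' * g (X j) - L' * g (X k) - L' * (inner ℝ (W k) (X j) : ℝ)
          + L' * (inner ℝ (W k) (X k) : ℝ) := by ring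
    rw [e2, e4] at h
    rw [e1, e3] at h
    -- unnormalized bound
    have hub : L' * (inner ℝ (W k) (X j) : ℝ) - (inner ℝ (W k) (W j) : ℝ)
        ≤ (L' * g (X j) - 1 / 2 * ‖W j‖ ^ 2)
          + ((L' * (inner ℝ (W k) (X k) : ℝ) - L' * g (X k)) - 1 / 2 * ‖W k‖ ^ 2) := by
      linarith
    have hpos : (0:ℝ) < (ρ ^ k)⁻¹ * (ρ ^ j)⁻¹ :=
      mul_pos (inv_pos.mpr (hρk k)) (inv_pos.mpr (hρk j))
    have h5 := mul_le_mul_of_nonneg_left hub hpos.le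
    rw [hip k j]
    refine le_trans (by exact h5) (le_of_eq ?_)
    rw [hzpow j k, hzpow k j, hPapp j, hRapp j, hQapp k, hRapp k]
    field_simp
  -- summation setup
  obtain ⟨Z, hZapp⟩ : ∃ Z : ℤ → ℝ, ∀ j, Z j = if 0 ≤ j then ‖y j.toNat‖ ^ 2 else 0 :=
    ⟨_, fun j => rfl⟩
  have hZ0 : ∀ j, 0 ≤ Z j := by
    intro j; rw [hZapp j]; split_ifs <;> positivity
  have hZsum : ∀ i : ℤ, Summable (fun k : ℕ => Z ((k:ℤ) + i)) := by
    intro i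
    obtain n | n := i
    · simp only [Int.ofNat_eq_natCast]
      have he : (fun k : ℕ => Z ((k:ℤ) + (n:ℤ))) = fun k => ‖y (k + n)‖ ^ 2 := by
        funext k
        rw [hZapp]
        have ht : ((k:ℤ) + (n:ℤ)).toNat = k + n := by omega
        rw [if_pos (by omega : (0:ℤ) ≤ (k:ℤ) + (n:ℤ)), ht]
      rw [he]
      exact (summable_nat_add_iff n).2 hy
    · simp only [Int.negSucc_eq]
      apply (summable_nat_add_iff (n + 1)).1
      have he : (fun k : ℕ => Z (((k + (n + 1) : ℕ):ℤ) + -((n:ℤ) + 1))) = fun k => ‖y k‖ ^ 2 := by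
        funext k
        rw [hZapp]
        have ht : (((k + (n + 1) : ℕ):ℤ) + -((n:ℤ) + 1)).toNat = k := by omega
        rw [if_pos (by omega : (0:ℤ) ≤ ((k + (n + 1) : ℕ):ℤ) + -((n:ℤ) + 1)), ht]
      rw [he]
      exact hy
  obtain ⟨T, hTapp⟩ : ∃ T : ℕ → ℤ → ℝ,
      ∀ k i, T k i = mc i * (inner ℝ (w k) (u ((k:ℤ) + i)) : ℝ) := ⟨_, fun k i => rfl⟩
  obtain ⟨F1, hF1app⟩ : ∃ F1 : ℕ → ℤ → ℝ, ∀ k i, F1 k i =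
      if 0 ≤ (k:ℤ) + i then mc i * ρ ^ i * (P ((k:ℤ) + i).toNat - R ((k:ℤ) + i).toNat) else 0 :=
    ⟨_, fun k i => rfl⟩
  obtain ⟨F2, hF2app⟩ : ∃ F2 : ℕ → ℤ → ℝ, ∀ k i, F2 k i =
      if 0 ≤ (k:ℤ) + i then mc i * ρ ^ (-i) * (Q k - R k) else 0 := ⟨_, fun k i => rfl⟩
  obtain ⟨G, hGapp⟩ : ∃ G : ℕ → ℤ → ℝ, ∀ j i, G j i =
      if i ≤ (j:ℤ) then mc i * ρ ^ i * (P j - R j) else 0 := ⟨_, fun j i => rfl⟩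
  -- pointwise comparison
  have hTF : ∀ k : ℕ, ∀ i ∈ Finset.Icc (-(lm : ℤ)) (lp : ℤ), F1 k i + F2 k i ≤ T k i := by
    intro k i hi
    by_cases hki : 0 ≤ (k:ℤ) + i
    · by_cases hi0 : i = 0
      · subst hi0
        have hkk : ((k:ℤ) + 0) = (k:ℤ) := by omega
        rw [hTapp, hkk, hdiag k]
        rw [hF1app, hF2app, if_pos hki, if_pos hki, hkk]
        have ht : ((k:ℤ)).toNat = k := Int.toNat_natCast k
        rw [ht, zpow_zero, neg_zero, zpow_zero]
        have : mc 0 * 1 * (P k - R k) + mc 0 * 1 * (Q k - R k)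
            = mc 0 * ((P k - R k) + (Q k - R k)) := by ring
        rw [this]
      · have hmc : mc i ≤ 0 := hneg i hi hi0
        have hj : ((((k:ℤ) + i).toNat : ℤ)) = (k:ℤ) + i := Int.toNat_of_nonneg hki
        have hTval : T k i = mc i * (inner ℝ (w k) (u ((((k:ℤ) + i).toNat : ℕ) : ℤ)) : ℝ) := by
          rw [hTapp, hj]
        have hc := hcross k ((k:ℤ) + i).toNat
        have he1 : ((((k:ℤ) + i).toNat : ℤ)) - (k:ℤ) = i := by omega
        have he2 : (k:ℤ) - ((((k:ℤ) + i).toNat : ℤ)) = -i := by omega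
        rw [he1, he2] at hc
        have h5 := mul_le_mul_of_nonpos_left hc hmc
        rw [hTval]
        refine le_trans (le_of_eq ?_) h5
        rw [hF1app, hF2app, if_pos hki, if_pos hki]
        ring
    · rw [hF1app, hF2app, if_neg hki, if_neg hki, hTapp]
      rw [hu ((k:ℤ) + i), if_pos (by omega : (k:ℤ) + i < 0)]
      simp
  -- zero case for T
  have hTzero : ∀ (k : ℕ) (i : ℤ), ¬(0 ≤ (k:ℤ) + i) → T k i = 0 := by
    intro k i hki
    rw [hTapp k i, hu ((k:ℤ) + i), if_pos (by omega : (k:ℤ) + i < 0)]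
    simp
  -- bounds
  have habs : ∀ i : ℤ, (0:ℝ) ≤ |mc i| := fun i => abs_nonneg _
  have hρlm : ∀ i : ℤ, -(lm:ℤ) ≤ i → ρ ^ i ≤ ρ ^ (-(lm:ℤ)) := fun i hi =>
    zpow_le_zpow_right_of_le_one₀ hρ0 hρ1 hi
  have hρlp : ∀ i : ℤ, i ≤ (lp:ℤ) → ρ ^ (-i) ≤ ρ ^ (-(lp:ℤ)) := fun i hi =>
    zpow_le_zpow_right_of_le_one₀ hρ0 hρ1 (by omega)
  have hzpos : ∀ i : ℤ, (0:ℝ) < ρ ^ i := fun i => zpow_pos hρ0 i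
  have hTbound : ∀ (k : ℕ) (i : ℤ), i ∈ Finset.Icc (-(lm:ℤ)) (lp:ℤ) →
      |T k i| ≤ |mc i| * (L' ^ 2 * (‖y k‖ ^ 2 + Z ((k:ℤ) + i))) := by
    intro k i _
    by_cases hki : 0 ≤ (k:ℤ) + i
    · have hj : ((((k:ℤ) + i).toNat : ℕ) : ℤ) = (k:ℤ) + i := Int.toNat_of_nonneg hki
      have hZv : Z ((k:ℤ) + i) = ‖y ((k:ℤ) + i).toNat‖ ^ 2 := by rw [hZapp, if_pos hki]
      have hueq : u ((k:ℤ) + i) = u ((((k:ℤ) + i).toNat : ℕ) : ℤ) := by rw [hj]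
      rw [hTapp k i, hueq, abs_mul, hZv]
      have h1 : |(inner ℝ (w k) (u ((((k:ℤ) + i).toNat : ℕ) : ℤ)) : ℝ)|
          ≤ ‖w k‖ * ‖u ((((k:ℤ) + i).toNat : ℕ) : ℤ)‖ := abs_real_inner_le_norm _ _
      have h2 : ‖w k‖ * ‖u ((((k:ℤ) + i).toNat : ℕ) : ℤ)‖
          ≤ (L' * ‖y k‖) * (2 * L' * ‖y ((k:ℤ) + i).toNat‖) :=
        mul_le_mul (hwnorm k) (hunorm _) (norm_nonneg _) (by positivity)
      have h3 : (L' * ‖y k‖) * (2 * L' * ‖y ((k:ℤ) + i).toNat‖)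
          ≤ L' ^ 2 * (‖y k‖ ^ 2 + ‖y ((k:ℤ) + i).toNat‖ ^ 2) := by
        nlinarith [sq_nonneg (‖y k‖ - ‖y ((k:ℤ) + i).toNat‖), sq_nonneg L']
      exact mul_le_mul_of_nonneg_left (le_trans h1 (le_trans h2 h3)) (habs i)
    · rw [hTzero k i hki, abs_zero]
      have := hZ0 ((k:ℤ) + i)
      positivity
  have hF1bound : ∀ (k : ℕ) (i : ℤ), i ∈ Finset.Icc (-(lm:ℤ)) (lp:ℤ) →
      |F1 k i| ≤ |mc i| * ρ ^ (-(lm:ℤ)) * (L' ^ 2 * Z ((k:ℤ) + i)) := by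
    intro k i hi
    rw [Finset.mem_Icc] at hi
    by_cases hki : 0 ≤ (k:ℤ) + i
    · have hZv : Z ((k:ℤ) + i) = ‖y ((k:ℤ) + i).toNat‖ ^ 2 := by rw [hZapp, if_pos hki]
      rw [hF1app, if_pos hki, hZv]
      have hPR : 0 ≤ P ((k:ℤ) + i).toNat - R ((k:ℤ) + i).toNat :=
        sub_nonneg.mpr (hRP _)
      have hPRb : P ((k:ℤ) + i).toNat - R ((k:ℤ) + i).toNat
          ≤ L' ^ 2 * ‖y ((k:ℤ) + i).toNat‖ ^ 2 :=
        le_trans (by have := hR0 ((k:ℤ) + i).toNat; linarith) (hPb _)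
      rw [abs_mul, abs_mul, abs_of_pos (hzpos i), abs_of_nonneg hPR]
      have h4 : ρ ^ i * (P ((k:ℤ) + i).toNat - R ((k:ℤ) + i).toNat)
          ≤ ρ ^ (-(lm:ℤ)) * (L' ^ 2 * ‖y ((k:ℤ) + i).toNat‖ ^ 2) :=
        mul_le_mul (hρlm i hi.1) hPRb hPR (le_of_lt (hzpos _))
      calc |mc i| * ρ ^ i * (P ((k:ℤ) + i).toNat - R ((k:ℤ) + i).toNat)
          = |mc i| * (ρ ^ i * (P ((k:ℤ) + i).toNat - R ((k:ℤ) + i).toNat)) := by ring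
        _ ≤ |mc i| * (ρ ^ (-(lm:ℤ)) * (L' ^ 2 * ‖y ((k:ℤ) + i).toNat‖ ^ 2)) :=
            mul_le_mul_of_nonneg_left h4 (habs i)
        _ = |mc i| * ρ ^ (-(lm:ℤ)) * (L' ^ 2 * ‖y ((k:ℤ) + i).toNat‖ ^ 2) := by ring
    · rw [hF1app k i, if_neg hki, abs_zero]
      have := hZ0 ((k:ℤ) + i)
      positivity
  have hF2bound : ∀ (k : ℕ) (i : ℤ), i ∈ Finset.Icc (-(lm:ℤ)) (lp:ℤ) →
      |F2 k i| ≤ |mc i| * ρ ^ (-(lp:ℤ)) * (L' ^ 2 * ‖y k‖ ^ 2) := by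
    intro k i hi
    rw [Finset.mem_Icc] at hi
    by_cases hki : 0 ≤ (k:ℤ) + i
    · rw [hF2app k i, if_pos hki]
      have hQR : 0 ≤ Q k - R k := sub_nonneg.mpr (hRQ _)
      have hQRb : Q k - R k ≤ L' ^ 2 * ‖y k‖ ^ 2 :=
        le_trans (by have := hR0 k; linarith) (hQb _)
      rw [abs_mul, abs_mul, abs_of_pos (hzpos (-i)), abs_of_nonneg hQR]
      have h4 : ρ ^ (-i) * (Q k - R k) ≤ ρ ^ (-(lp:ℤ)) * (L' ^ 2 * ‖y k‖ ^ 2) :=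
        mul_le_mul (hρlp i hi.2) hQRb hQR (le_of_lt (hzpos _))
      calc |mc i| * ρ ^ (-i) * (Q k - R k) = |mc i| * (ρ ^ (-i) * (Q k - R k)) := by ring
        _ ≤ |mc i| * (ρ ^ (-(lp:ℤ)) * (L' ^ 2 * ‖y k‖ ^ 2)) :=
            mul_le_mul_of_nonneg_left h4 (habs i)
        _ = |mc i| * ρ ^ (-(lp:ℤ)) * (L' ^ 2 * ‖y k‖ ^ 2) := by ring
    · rw [hF2app k i, if_neg hki, abs_zero]
      positivity
  have hGbound : ∀ (j : ℕ) (i : ℤ), i ∈ Finset.Icc (-(lm:ℤ)) (lp:ℤ) →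
      |G j i| ≤ |mc i| * ρ ^ (-(lm:ℤ)) * (L' ^ 2 * ‖y j‖ ^ 2) := by
    intro j i hi
    rw [Finset.mem_Icc] at hi
    by_cases hij : i ≤ (j:ℤ)
    · rw [hGapp j i, if_pos hij]
      have hPR : 0 ≤ P j - R j := sub_nonneg.mpr (hRP _)
      have hPRb : P j - R j ≤ L' ^ 2 * ‖y j‖ ^ 2 :=
        le_trans (by have := hR0 j; linarith) (hPb _)
      rw [abs_mul, abs_mul, abs_of_pos (hzpos i), abs_of_nonneg hPR]
      have h4 : ρ ^ i * (P j - R j) ≤ ρ ^ (-(lm:ℤ)) * (L' ^ 2 * ‖y j‖ ^ 2) :=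
        mul_le_mul (hρlm i hi.1) hPRb hPR (le_of_lt (hzpos _))
      calc |mc i| * ρ ^ i * (P j - R j) = |mc i| * (ρ ^ i * (P j - R j)) := by ring
        _ ≤ |mc i| * (ρ ^ (-(lm:ℤ)) * (L' ^ 2 * ‖y j‖ ^ 2)) :=
            mul_le_mul_of_nonneg_left h4 (habs i)
        _ = |mc i| * ρ ^ (-(lm:ℤ)) * (L' ^ 2 * ‖y j‖ ^ 2) := by ring
    · rw [hGapp j i, if_neg hij, abs_zero]
      positivity
  -- summability
  have hTcol : ∀ i ∈ Finset.Icc (-(lm:ℤ)) (lp:ℤ), Summable (fun k => T k i) := by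
    intro i hi
    apply Summable.of_norm_bounded (((hy.add (hZsum i)).mul_left (L' ^ 2)).mul_left (|mc i|))
    intro k
    rw [Real.norm_eq_abs]
    exact hTbound k i hi
  have hF1col : ∀ i ∈ Finset.Icc (-(lm:ℤ)) (lp:ℤ), Summable (fun k => F1 k i) := by
    intro i hi
    apply Summable.of_norm_bounded (((hZsum i).mul_left (L' ^ 2)).mul_left
      (|mc i| * ρ ^ (-(lm:ℤ))))
    intro k
    rw [Real.norm_eq_abs]
    exact hF1bound k i hi
  have hF2col : ∀ i ∈ Finset.Icc (-(lm:ℤ)) (lp:ℤ), Summable (fun k => F2 k i) := by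
    intro i hi
    apply Summable.of_norm_bounded ((hy.mul_left (L' ^ 2)).mul_left (|mc i| * ρ ^ (-(lp:ℤ))))
    intro k
    rw [Real.norm_eq_abs]
    exact hF2bound k i hi
  have hGcol : ∀ i ∈ Finset.Icc (-(lm:ℤ)) (lp:ℤ), Summable (fun j => G j i) := by
    intro i hi
    apply Summable.of_norm_bounded ((hy.mul_left (L' ^ 2)).mul_left (|mc i| * ρ ^ (-(lm:ℤ))))
    intro j
    rw [Real.norm_eq_abs]
    exact hGbound j i hi
  -- row summabilities
  have hBrow : ∀ i ∈ Finset.Icc (-(lm:ℤ)) (lp:ℤ), Summable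
      (fun k : ℕ => |mc i| * (L' ^ 2 * (‖y k‖ ^ 2 + Z ((k:ℤ) + i)))) :=
    fun i _ => ((hy.add (hZsum i)).mul_left (L' ^ 2)).mul_left (|mc i|)
  have hTrowS : Summable (fun k => ∑ i ∈ Finset.Icc (-(lm:ℤ)) (lp:ℤ), T k i) := by
    apply Summable.of_norm_bounded (summable_sum hBrow)
    intro k
    rw [Real.norm_eq_abs]
    calc |∑ i ∈ Finset.Icc (-(lm:ℤ)) (lp:ℤ), T k i|
        ≤ ∑ i ∈ Finset.Icc (-(lm:ℤ)) (lp:ℤ), |T k i| := Finset.abs_sum_le_sum_abs _ _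
      _ ≤ ∑ i ∈ Finset.Icc (-(lm:ℤ)) (lp:ℤ), |mc i| * (L' ^ 2 * (‖y k‖ ^ 2 + Z ((k:ℤ) + i))) :=
          Finset.sum_le_sum (fun i hi => hTbound k i hi)
  have hF1rowS : Summable (fun k => ∑ i ∈ Finset.Icc (-(lm:ℤ)) (lp:ℤ), F1 k i) :=
    summable_sum hF1col
  have hF2rowS : Summable (fun k => ∑ i ∈ Finset.Icc (-(lm:ℤ)) (lp:ℤ), F2 k i) :=
    summable_sum hF2col
  have hFrowS : Summable (fun k => ∑ i ∈ Finset.Icc (-(lm:ℤ)) (lp:ℤ), (F1 k i + F2 k i)) :=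
    summable_sum (fun i hi => (hF1col i hi).add (hF2col i hi))
  -- main comparison
  have hmain : ∑' k, ∑ i ∈ Finset.Icc (-(lm:ℤ)) (lp:ℤ), (F1 k i + F2 k i)
      ≤ ∑' k, ∑ i ∈ Finset.Icc (-(lm:ℤ)) (lp:ℤ), T k i :=
    Summable.tsum_le_tsum (fun k => Finset.sum_le_sum (hTF k)) hFrowS hTrowS
  have hsplit : ∀ k, ∑ i ∈ Finset.Icc (-(lm:ℤ)) (lp:ℤ), (F1 k i + F2 k i)
      = (∑ i ∈ Finset.Icc (-(lm:ℤ)) (lp:ℤ), F1 k i)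
        + ∑ i ∈ Finset.Icc (-(lm:ℤ)) (lp:ℤ), F2 k i := fun k => Finset.sum_add_distrib
  have e1 : ∑' k, ∑ i ∈ Finset.Icc (-(lm:ℤ)) (lp:ℤ), (F1 k i + F2 k i)
      = (∑' k, ∑ i ∈ Finset.Icc (-(lm:ℤ)) (lp:ℤ), F1 k i)
        + ∑' k, ∑ i ∈ Finset.Icc (-(lm:ℤ)) (lp:ℤ), F2 k i := by
    rw [tsum_congr hsplit]
    exact Summable.tsum_add hF1rowS hF2rowS
  -- nonnegativity of the F2 part
  have hF2nn : ∀ k, 0 ≤ ∑ i ∈ Finset.Icc (-(lm:ℤ)) (lp:ℤ), F2 k i := by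
    intro k
    have he : ∀ i ∈ Finset.Icc (-(lm:ℤ)) (lp:ℤ), F2 k i
        = (if 0 ≤ (k:ℤ) + i then mc i * ρ ^ (-i) else 0) * (Q k - R k) := by
      intro i _
      rw [hF2app k i]
      split_ifs <;> ring
    rw [Finset.sum_congr rfl he, ← Finset.sum_mul]
    apply mul_nonneg _ (sub_nonneg.mpr (hRQ k))
    rw [← Finset.sum_filter]
    have h2 := Finset.sum_filter_add_sum_filter_not (Finset.Icc (-(lm:ℤ)) (lp:ℤ))
      (fun i => 0 ≤ (k:ℤ) + i) (fun i => mc i * ρ ^ (-i))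
    have h3 : ∑ i ∈ (Finset.Icc (-(lm:ℤ)) (lp:ℤ)).filter (fun i => ¬(0 ≤ (k:ℤ) + i)),
        mc i * ρ ^ (-i) ≤ 0 := by
      apply Finset.sum_nonpos
      intro i hi
      rw [Finset.mem_filter] at hi
      have hne : i ≠ 0 := by
        have := hi.2
        omega
      have hmc := hneg i hi.1 hne
      nlinarith [hzpos (-i)]
    linarith [hsum1, h2, h3]
  have hF2tnn : 0 ≤ ∑' k, ∑ i ∈ Finset.Icc (-(lm:ℤ)) (lp:ℤ), F2 k i := tsum_nonneg hF2nn
  -- nonnegativity of the F1 part via shift to G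
  have hshift : ∀ i ∈ Finset.Icc (-(lm:ℤ)) (lp:ℤ), ∑' k, F1 k i = ∑' j, G j i := by
    intro i hi
    obtain n | n := i
    · simp only [Int.ofNat_eq_natCast] at hi ⊢
      have hFG : ∀ k : ℕ, F1 k (n:ℤ) = G (k + n) (n:ℤ) := by
        intro k
        rw [hF1app k (n:ℤ), hGapp (k + n) (n:ℤ)]
        rw [if_pos (by omega : (0:ℤ) ≤ (k:ℤ) + (n:ℤ)),
          if_pos (by omega : (n:ℤ) ≤ ((k + n : ℕ):ℤ))]
        have ht : ((k:ℤ) + (n:ℤ)).toNat = k + n := by omega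
        rw [ht]
      rw [tsum_congr hFG]
      have h := Summable.sum_add_tsum_nat_add (f := fun j => G j (n:ℤ)) n (hGcol (n:ℤ) hi)
      have hzr : ∑ j ∈ Finset.range n, G j (n:ℤ) = 0 := by
        apply Finset.sum_eq_zero
        intro j hj
        rw [Finset.mem_range] at hj
        rw [hGapp j (n:ℤ), if_neg (by omega : ¬((n:ℤ) ≤ (j:ℤ)))]
      linarith [h]
    · simp only [Int.negSucc_eq] at hi ⊢
      have hFG : ∀ k : ℕ, F1 (k + (n + 1)) (-((n:ℤ) + 1)) = G k (-((n:ℤ) + 1)) := by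
        intro k
        rw [hF1app (k + (n + 1)) _, hGapp k _]
        rw [if_pos (by push_cast; omega : (0:ℤ) ≤ ((k + (n + 1) : ℕ):ℤ) + -((n:ℤ) + 1)),
          if_pos (by omega : -((n:ℤ) + 1) ≤ (k:ℤ))]
        have ht : (((k + (n + 1) : ℕ):ℤ) + -((n:ℤ) + 1)).toNat = k := by omega
        rw [ht]
      have h := Summable.sum_add_tsum_nat_add (f := fun k => F1 k (-((n:ℤ) + 1))) (n + 1)
        (hF1col (-((n:ℤ) + 1)) hi)
      have hzr : ∑ k ∈ Finset.range (n + 1), F1 k (-((n:ℤ) + 1)) = 0 := by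
        apply Finset.sum_eq_zero
        intro k hk
        rw [Finset.mem_range] at hk
        rw [hF1app k _, if_neg (by omega : ¬((0:ℤ) ≤ (k:ℤ) + -((n:ℤ) + 1)))]
      have h4 : ∑' k, F1 (k + (n + 1)) (-((n:ℤ) + 1)) = ∑' k, G k (-((n:ℤ) + 1)) :=
        tsum_congr hFG
      linarith [h, h4]
  have hGnn : ∀ j : ℕ, 0 ≤ ∑ i ∈ Finset.Icc (-(lm:ℤ)) (lp:ℤ), G j i := by
    intro j
    have he : ∀ i ∈ Finset.Icc (-(lm:ℤ)) (lp:ℤ), G j i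
        = (if i ≤ (j:ℤ) then mc i * ρ ^ i else 0) * (P j - R j) := by
      intro i _
      rw [hGapp j i]
      split_ifs <;> ring
    rw [Finset.sum_congr rfl he, ← Finset.sum_mul]
    apply mul_nonneg _ (sub_nonneg.mpr (hRP j))
    rw [← Finset.sum_filter]
    have h2 := Finset.sum_filter_add_sum_filter_not (Finset.Icc (-(lm:ℤ)) (lp:ℤ))
      (fun i => i ≤ (j:ℤ)) (fun i => mc i * ρ ^ i)
    have h3 : ∑ i ∈ (Finset.Icc (-(lm:ℤ)) (lp:ℤ)).filter (fun i => ¬(i ≤ (j:ℤ))),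
        mc i * ρ ^ i ≤ 0 := by
      apply Finset.sum_nonpos
      intro i hi
      rw [Finset.mem_filter] at hi
      have hne : i ≠ 0 := by
        have := hi.2
        omega
      have hmc := hneg i hi.1 hne
      nlinarith [hzpos i]
    linarith [hsum2, h2, h3]
  have hF1tnn : 0 ≤ ∑' k, ∑ i ∈ Finset.Icc (-(lm:ℤ)) (lp:ℤ), F1 k i := by
    rw [Summable.tsum_finsetSum hF1col, Finset.sum_congr rfl hshift, ← Summable.tsum_finsetSum hGcol]
    exact tsum_nonneg hGnn
  -- first goal: summability
  have habs_eq : ∀ ki : ℕ × ℤ,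
      (if ki.2 ∈ Finset.Icc (-(lm : ℤ)) (lp : ℤ) then |T ki.1 ki.2| else 0)
      = (if ki.2 ∈ Finset.Icc (-(lm : ℤ)) (lp : ℤ) then
          |mc ki.2 * (inner ℝ (w ki.1) (u ((ki.1 : ℤ) + ki.2)) : ℝ)| else 0) := by
    intro ki
    rw [hTapp ki.1 ki.2]
  have hBprod : Summable (fun ki : ℕ × ℤ =>
      if ki.2 ∈ Finset.Icc (-(lm:ℤ)) (lp:ℤ) then
        |mc ki.2| * (L' ^ 2 * (‖y ki.1‖ ^ 2 + Z ((ki.1:ℤ) + ki.2))) else 0) := by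
    have hnn : (0:ℕ × ℤ → ℝ) ≤ (fun ki : ℕ × ℤ =>
        if ki.2 ∈ Finset.Icc (-(lm:ℤ)) (lp:ℤ) then
          |mc ki.2| * (L' ^ 2 * (‖y ki.1‖ ^ 2 + Z ((ki.1:ℤ) + ki.2))) else 0) := by
      intro ki
      simp only [Pi.zero_apply]
      split_ifs
      · have := hZ0 ((ki.1:ℤ) + ki.2)
        positivity
      · exact le_refl 0
    rw [summable_prod_of_nonneg hnn]
    constructor
    · intro k
      apply summable_of_ne_finset_zero (s := Finset.Icc (-(lm:ℤ)) (lp:ℤ))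
      intro i hi
      exact if_neg hi
    · apply Summable.congr (summable_sum hBrow)
      intro k
      rw [tsum_eq_sum (s := Finset.Icc (-(lm:ℤ)) (lp:ℤ)) (fun i hi => if_neg hi)]
      exact (Finset.sum_congr rfl (fun i hi => (if_pos hi).symm))
  have hsummable : Summable (fun ki : ℕ × ℤ =>
      if ki.2 ∈ Finset.Icc (-(lm:ℤ)) (lp:ℤ) then |T ki.1 ki.2| else 0) := by
    apply Summable.of_nonneg_of_le _ _ hBprod
    · intro ki
      split_ifs
      · exact abs_nonneg _
      · exact le_refl 0
    · intro ki
      by_cases hi : ki.2 ∈ Finset.Icc (-(lm:ℤ)) (lp:ℤ)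
      · rw [if_pos hi, if_pos hi]
        exact hTbound ki.1 ki.2 hi
      · rw [if_neg hi, if_neg hi]
  refine ⟨Summable.congr hsummable habs_eq, ?_⟩
  have hgoal_eq : (∑' k : ℕ, ∑ i ∈ Finset.Icc (-(lm : ℤ)) (lp : ℤ),
        mc i * (inner ℝ (w k) (u ((k : ℤ) + i)) : ℝ))
      = ∑' k, ∑ i ∈ Finset.Icc (-(lm:ℤ)) (lp:ℤ), T k i :=
    tsum_congr (fun k => Finset.sum_congr rfl (fun i _ => (hTapp k i).symm))
  rw [hgoal_eq]
  linarith [hmain, hF1tnn, hF2tnn, e1]
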